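/- Let G be a two-player win/lose game with prefix-independent winning condition W, let V⁻ := V \ (W₀ᵐ(G) ∪ W₁ᵐ(G)) be nonempty, and let G⁻ := ⟨V₀ ∩ V⁻, V₁ ∩ V⁻, E ∩ (V⁻ × V⁻), C, π|_{V⁻}, W⟩ be the restriction of G to V⁻. Then G⁻ is a well-defined game (every vertex of V⁻ has an outgoing edge within V⁻), Wᵢᵐ(G⁻) ⊆ Wᵢᵐ(G) for i = 0,1, and consequently W₀ᵐ(G⁻) ∪ W₁ᵐ(G⁻) = ∅. -/

import Mathlib

/-- A run in the graph `(V, E)`: an infinite `E`-path. -/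
def IsRun {V : Type*} (E : Set (V × V)) (ρ : ℕ → V) : Prop :=
  ∀ n, (ρ n, ρ (n + 1)) ∈ E

/-- A run is compatible with a strategy `σ` of the player controlling `Vi`. -/
def Compatible {V : Type*} (Vi : Set V) (σ : V → V) (ρ : ℕ → V) : Prop :=
  ∀ n, ρ n ∈ Vi → ρ (n + 1) = σ (ρ n)

/-- A memoryless strategy for the player controlling `Vi` (encoded as a total
function whose values matter only on `Vi`). -/
def IsStrategy {V : Type*} (Vi : Set V) (E : Set (V × V)) (σ : V → V) : Prop :=
  ∀ v ∈ Vi, (v, σ v) ∈ E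

/-- The strategy `σ` of the player controlling `Vi` whose winning condition is
`Win` wins from `v`: every compatible run from `v` has its color sequence in `Win`. -/
def WinsFrom {V : Type*} {C : Type*} (Vi : Set V) (E : Set (V × V)) (π : V → C)
    (Win : Set (ℕ → C)) (σ : V → V) (v : V) : Prop :=
  ∀ ρ : ℕ → V, ρ 0 = v → IsRun E ρ → Compatible Vi σ ρ → (fun n => π (ρ n)) ∈ Win

/-- `Wᵢᵐ(G, σ)`: the vertices from which `σ` wins. -/
def WinRegion {V : Type*} {C : Type*} (Vi : Set V) (E : Set (V × V)) (π : V → C)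
    (Win : Set (ℕ → C)) (σ : V → V) : Set V :=
  {v | WinsFrom Vi E π Win σ v}

/-- `Wᵢᵐ(G)`: the vertices from which some memoryless strategy wins. -/
def WinRegionAll {V : Type*} {C : Type*} (Vi : Set V) (E : Set (V × V)) (π : V → C)
    (Win : Set (ℕ → C)) : Set V :=
  {v | ∃ σ, IsStrategy Vi E σ ∧ WinsFrom Vi E π Win σ v}

/-- Concatenation `w·ρ` of a finite word and an infinite sequence. -/
def ListAppend {C : Type*} (w : List C) (ρ : ℕ → C) : ℕ → C :=
  fun n => if h : n < w.length then w.get ⟨n, h⟩ else ρ (n - w.length)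

/-- `W` is prefix-independent: `wρ ∈ W ↔ ρ ∈ W`. -/
def PrefixIndependent {C : Type*} (W : Set (ℕ → C)) : Prop :=
  ∀ (w : List C) (ρ : ℕ → C), ListAppend w ρ ∈ W ↔ ρ ∈ W

/-- Uniform memoryless determinacy of the game `⟨V₀, V₁, E, π, W⟩`. -/
def UniformlyDetermined {V : Type*} {C : Type*} (V0 V1 : Set V) (E : Set (V × V))
    (π : V → C) (W : Set (ℕ → C)) : Prop :=
  ∃ σ τ, IsStrategy V0 E σ ∧ IsStrategy V1 E τ ∧
    WinRegion V0 E π W σ ∪ WinRegion V1 E π Wᶜ τ = Set.univ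


/-!
Prefix independence gives each player a single memoryless strategy winning from all of
`Wᵢᵐ(G)`: well-order the memoryless strategies and play, at each `w ∈ Wᵢᵐ(G)`, the least
strategy winning from `w`. Along a consistent play this least strategy can only decrease, so it
eventually stabilises, and from then on the play is consistent with one strategy winning from
there.

With such a strategy, a vertex of player `i` with an edge into `Wᵢᵐ(G)`, or any vertex all of
whose edges lead into `Wᵢᵐ(G)`, lies in `Wᵢᵐ(G)`. Hence every vertex of `V⁻` keeps an edge
inside `V⁻`. Moreover a memoryless winning strategy of `G⁻` extends to `G` by the uniform
strategy outside `V⁻`: a play can leave `V⁻` only into `Wᵢᵐ(G)`, since the opponent moving into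
`W₁₋ᵢᵐ(G)` would put his own vertex there.
-/

section Games

variable {V C : Type*} {Vi : Set V} {E : Set (V × V)} {π : V → C} {W : Set (ℕ → C)}

theorem PrefixIndependent.compl (hW : PrefixIndependent W) : PrefixIndependent Wᶜ :=
  fun w ρ => not_congr (hW w ρ)

theorem PrefixIndependent.shift_mem_iff (hW : PrefixIndependent W) (f : ℕ → C) (N : ℕ) :
    (fun n => f (n + N)) ∈ W ↔ f ∈ W := by
  have hf : ListAppend (List.ofFn fun i : Fin N => f i) (fun n => f (n + N)) = f := by
    funext n
    simp only [ListAppend, List.length_ofFn]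
    split_ifs with hn
    · simp
    · congr 1; omega
  rw [← hW (List.ofFn fun i : Fin N => f i), hf]

theorem WinsFrom.of_edge (hW : PrefixIndependent W) {σ : V → V} {w u : V}
    (hwin : WinsFrom Vi E π W σ w) (hwu : (w, u) ∈ E) (hσ : w ∈ Vi → u = σ w) :
    WinsFrom Vi E π W σ u := by
  intro ρ h0 hrun hcomp
  let ρ' : ℕ → V := fun n => if n = 0 then w else ρ (n - 1)
  have hρ' : ∀ n, ρ' (n + 1) = ρ n := fun n => by simp [ρ']
  have hrun' : IsRun E ρ' := by
    rintro (_ | n)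
    · simpa [ρ', h0] using hwu
    · simpa only [hρ'] using hrun n
  have hcomp' : Compatible Vi σ ρ' := by
    rintro (_ | n) hn
    · simpa [ρ', h0] using hσ hn
    · simpa only [hρ'] using hcomp n (by simpa only [hρ'] using hn)
  simpa only [hρ'] using (hW.shift_mem_iff _ 1).mpr (hwin ρ' rfl hrun' hcomp')

theorem WinsFrom.mem_of_compatible_from (hW : PrefixIndependent W) {σ : V → V} {ρ : ℕ → V}
    {N : ℕ} (hwin : WinsFrom Vi E π W σ (ρ N)) (hrun : IsRun E ρ)
    (hcomp : ∀ n ≥ N, ρ n ∈ Vi → ρ (n + 1) = σ (ρ n)) :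
    (fun n => π (ρ n)) ∈ W := by
  refine (hW.shift_mem_iff _ N).mp (hwin (fun k => ρ (k + N)) (by simp) (fun k => ?_) ?_)
  · simpa only [Nat.add_right_comm] using hrun (k + N)
  · intro k hk
    simpa only [Nat.add_right_comm] using hcomp (k + N) (Nat.le_add_left N k) hk

theorem mem_of_reach_winRegion (hW : PrefixIndependent W) {σ σ' : V → V}
    (hagree : ∀ w ∈ WinRegion Vi E π W σ, σ' w = σ w) {ρ : ℕ → V} (hrun : IsRun E ρ)
    (hcomp : Compatible Vi σ' ρ) {N : ℕ} (hN : ρ N ∈ WinRegion Vi E π W σ) :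
    (fun n => π (ρ n)) ∈ W := by
  have hstay : ∀ n ≥ N, ρ n ∈ WinRegion Vi E π W σ := by
    refine Nat.le_induction hN fun n _ hn => ?_
    exact WinsFrom.of_edge hW hn (hrun n) fun hv => (hcomp n hv).trans (hagree _ hn)
  exact WinsFrom.mem_of_compatible_from hW hN hrun
    fun n hn hv => (hcomp n hv).trans (hagree _ (hstay n hn))

theorem exists_winRegion_eq_winRegionAll (hW : PrefixIndependent W)
    (hE : ∀ v, ∃ u, (v, u) ∈ E) :
    ∃ σ, IsStrategy Vi E σ ∧ WinRegion Vi E π W σ = WinRegionAll Vi E π W := by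
  classical
  obtain ⟨_, _⟩ := exists_wellFoundedLT (V → V)
  set R := WinRegionAll Vi E π W
  let g : V → V → V := fun w => if h : w ∈ R then wellFounded_lt.min _ h else id
  have hg : ∀ w ∈ R, IsStrategy Vi E (g w) ∧ WinsFrom Vi E π W (g w) w := fun w hw => by
    simp only [g, dif_pos hw]
    exact wellFounded_lt.min_mem _ hw
  have hg_le : ∀ w ∈ R, ∀ s, IsStrategy Vi E s → WinsFrom Vi E π W s w → g w ≤ s :=
    fun w hw s hs hsw => by
      simp only [g, dif_pos hw]
      exact wellFounded_lt.min_le (s := {s | IsStrategy Vi E s ∧ WinsFrom Vi E π W s w})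
        ⟨hs, hsw⟩
  let σ : V → V := fun w => if w ∈ R then g w w else (hE w).choose
  have hσ : IsStrategy Vi E σ := fun v hv => by
    by_cases h : v ∈ R
    · simpa only [σ, if_pos h] using (hg v h).1 v hv
    · simpa only [σ, if_neg h] using (hE v).choose_spec
  refine ⟨σ, hσ, subset_antisymm (fun v hv => ⟨σ, hσ, hv⟩) fun v hv ρ h0 hrun hcomp => ?_⟩
  have hnext : ∀ n, ρ n ∈ R → WinsFrom Vi E π W (g (ρ n)) (ρ (n + 1)) := fun n hn =>
    (hg _ hn).2.of_edge hW (hrun n) fun hv => by rw [hcomp n hv]; simp only [σ, if_pos hn]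
  have hmem : ∀ n, ρ n ∈ R := fun n => by
    induction n with
    | zero => exact h0 ▸ hv
    | succ n ih => exact ⟨_, (hg _ ih).1, hnext n ih⟩
  have hanti : Antitone fun n => g (ρ n) := antitone_nat_of_succ_le fun n =>
    hg_le _ (hmem (n + 1)) _ (hg _ (hmem n)).1 (hnext n (hmem n))
  obtain ⟨N, hN⟩ := WellFoundedLT.antitone_chain_condition hanti
  refine WinsFrom.mem_of_compatible_from hW (hg _ (hmem N)).2 hrun fun n hn hv => ?_
  rw [hcomp n hv, hN n hn]
  simp only [σ, if_pos (hmem n)]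

theorem mem_winRegionAll_of_edge (hW : PrefixIndependent W) (hE : ∀ v, ∃ u, (v, u) ∈ E)
    {v u : V} (hv : v ∈ Vi) (hvu : (v, u) ∈ E) (hu : u ∈ WinRegionAll Vi E π W) :
    v ∈ WinRegionAll Vi E π W := by
  classical
  by_contra hvR
  obtain ⟨σ, hσ, hσR⟩ := exists_winRegion_eq_winRegionAll (Vi := Vi) (π := π) hW hE
  refine hvR ⟨Function.update σ v u, fun w hw => ?_, fun ρ h0 hrun hcomp => ?_⟩
  · rcases eq_or_ne w v with rfl | hwv
    · simpa using hvu
    · simpa [Function.update_of_ne hwv] using hσ w hw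
  · have hρ1 : ρ 1 = u := by simpa [h0] using hcomp 0 (h0 ▸ hv)
    refine mem_of_reach_winRegion hW (fun w hw => ?_) hrun hcomp (N := 1) (hσR ▸ hρ1 ▸ hu)
    exact Function.update_of_ne (by rintro rfl; exact hvR (hσR ▸ hw)) _ _

theorem mem_winRegionAll_of_forall_edge (hW : PrefixIndependent W)
    (hE : ∀ v, ∃ u, (v, u) ∈ E) {v : V} (hv : ∀ u, (v, u) ∈ E → u ∈ WinRegionAll Vi E π W) :
    v ∈ WinRegionAll Vi E π W := by
  obtain ⟨σ, hσ, hσR⟩ := exists_winRegion_eq_winRegionAll (Vi := Vi) (π := π) hW hE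
  refine ⟨σ, hσ, fun ρ h0 hrun hcomp => ?_⟩
  exact mem_of_reach_winRegion hW (fun _ _ => rfl) hrun hcomp (N := 1)
    (hσR ▸ hv _ (h0 ▸ hrun 0))

theorem mem_winRegionAll_union_of_forall_edge {Vj : Set V} {W' : Set (ℕ → C)}
    (hW : PrefixIndependent W) (hW' : PrefixIndependent W') (hE : ∀ v, ∃ u, (v, u) ∈ E)
    {v : V} (hv : v ∈ Vi)
    (hsucc : ∀ u, (v, u) ∈ E → u ∈ WinRegionAll Vi E π W ∪ WinRegionAll Vj E π W') :
    v ∈ WinRegionAll Vi E π W ∪ WinRegionAll Vj E π W' := by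
  by_cases h : ∃ u, (v, u) ∈ E ∧ u ∈ WinRegionAll Vi E π W
  · obtain ⟨u, hvu, hu⟩ := h
    exact Or.inl (mem_winRegionAll_of_edge hW hE hv hvu hu)
  · push Not at h
    exact Or.inr (mem_winRegionAll_of_forall_edge hW' hE
      fun u hvu => (hsucc u hvu).resolve_left (h u hvu))

theorem exists_edge_mem_compl_winRegionAll_union {V0 V1 : Set V}
    (hW : PrefixIndependent W) (hE : ∀ v, ∃ u, (v, u) ∈ E) (hcover : V0 ∪ V1 = Set.univ)
    {v : V} (hv : v ∈ (WinRegionAll V0 E π W ∪ WinRegionAll V1 E π Wᶜ)ᶜ) :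
    ∃ u ∈ (WinRegionAll V0 E π W ∪ WinRegionAll V1 E π Wᶜ)ᶜ, (v, u) ∈ E := by
  by_contra! h
  have hsucc : ∀ u, (v, u) ∈ E → u ∈ WinRegionAll V0 E π W ∪ WinRegionAll V1 E π Wᶜ :=
    fun u hvu => by_contra fun hu => h u hu hvu
  rcases hcover.symm ▸ Set.mem_univ v with hv0 | hv1
  · exact hv (mem_winRegionAll_union_of_forall_edge hW hW.compl hE hv0 hsucc)
  · rw [Set.union_comm] at hv hsucc
    exact hv (mem_winRegionAll_union_of_forall_edge hW.compl hW hE hv1 hsucc)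

theorem image_val_winRegionAll_restrict_subset {Vj : Set V} {W' : Set (ℕ → C)}
    (hW : PrefixIndependent W) (hW' : PrefixIndependent W') (hE : ∀ v, ∃ u, (v, u) ∈ E)
    (hcover : Vi ∪ Vj = Set.univ) {Vm : Set V}
    (hVm : Vm = (WinRegionAll Vi E π W ∪ WinRegionAll Vj E π W')ᶜ) :
    Subtype.val '' WinRegionAll {x : ↥Vm | x.val ∈ Vi}
        {p : ↥Vm × ↥Vm | (p.1.val, p.2.val) ∈ E} (fun x : ↥Vm => π x.val) W
      ⊆ WinRegionAll Vi E π W := by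
  classical
  rintro _ ⟨x, ⟨σm, hσm, hσm_win⟩, rfl⟩
  obtain ⟨σi, hσi, hσiR⟩ := exists_winRegion_eq_winRegionAll (Vi := Vi) (π := π) hW hE
  have hVm_iff : ∀ w, w ∈ Vm ↔ w ∉ WinRegionAll Vi E π W ∪ WinRegionAll Vj E π W' :=
    fun w => by rw [hVm]; rfl
  let σ : V → V := fun w => if h : w ∈ Vm then (σm ⟨w, h⟩).val
    else if w ∈ WinRegionAll Vi E π W then σi w else (hE w).choose
  have hσ : IsStrategy Vi E σ := fun w hw => by
    by_cases hm : w ∈ Vm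
    · simp only [σ, dif_pos hm]
      exact hσm ⟨w, hm⟩ hw
    · simp only [σ, dif_neg hm]
      split_ifs
      exacts [hσi w hw, (hE w).choose_spec]
  refine ⟨σ, hσ, fun ρ h0 hrun hcomp => ?_⟩
  by_cases hreach : ∃ N, ρ N ∈ WinRegionAll Vi E π W
  · obtain ⟨N, hN⟩ := hreach
    refine mem_of_reach_winRegion hW (fun w hw => ?_) hrun hcomp (hσiR ▸ hN)
    rw [hσiR] at hw
    simp only [σ, dif_neg fun hm => (hVm_iff w).mp hm (Or.inl hw), if_pos hw]
  push Not at hreach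
  have hstay : ∀ n, ρ n ∈ Vm := fun n => by
    induction n with
    | zero => exact h0 ▸ x.2
    | succ n ih =>
      rcases hcover.symm ▸ Set.mem_univ (ρ n) with hi | hj
      · simpa only [hcomp n hi, σ, dif_pos ih] using (σm ⟨ρ n, ih⟩).2
      · refine (hVm_iff _).mpr (not_or.mpr ⟨hreach _, fun hR => ?_⟩)
        exact (hVm_iff _).mp ih (Or.inr (mem_winRegionAll_of_edge hW' hE hj (hrun n) hR))
  refine hσm_win (fun n => ⟨ρ n, hstay n⟩) (Subtype.ext h0) hrun fun n hn => Subtype.ext ?_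
  simp only [hcomp n hn, σ, dif_pos (hstay n)]

end Games

theorem stmt11_general {V C : Type*}
    (V0 V1 : Set V) (E : Set (V × V)) (π : V → C) (W : Set (ℕ → C))
    (hcover : V0 ∪ V1 = Set.univ)
    (hE : ∀ v : V, ∃ u, (v, u) ∈ E)
    (hW : PrefixIndependent W)
    (Vm : Set V)
    (hVm : Vm = (WinRegionAll V0 E π W ∪ WinRegionAll V1 E π Wᶜ)ᶜ) :
    (∀ v ∈ Vm, ∃ u ∈ Vm, (v, u) ∈ E) ∧
    (Subtype.val '' WinRegionAll {x : ↥Vm | x.val ∈ V0}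
        {p : ↥Vm × ↥Vm | (p.1.val, p.2.val) ∈ E} (fun x : ↥Vm => π x.val) W
      ⊆ WinRegionAll V0 E π W) ∧
    (Subtype.val '' WinRegionAll {x : ↥Vm | x.val ∈ V1}
        {p : ↥Vm × ↥Vm | (p.1.val, p.2.val) ∈ E} (fun x : ↥Vm => π x.val) Wᶜ
      ⊆ WinRegionAll V1 E π Wᶜ) ∧
    (WinRegionAll {x : ↥Vm | x.val ∈ V0}
        {p : ↥Vm × ↥Vm | (p.1.val, p.2.val) ∈ E} (fun x : ↥Vm => π x.val) W ∪
     WinRegionAll {x : ↥Vm | x.val ∈ V1}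
        {p : ↥Vm × ↥Vm | (p.1.val, p.2.val) ∈ E} (fun x : ↥Vm => π x.val) Wᶜ
      = ∅) := by
  have h0 := image_val_winRegionAll_restrict_subset hW hW.compl hE hcover hVm
  have h1 := image_val_winRegionAll_restrict_subset hW.compl hW hE
    ((Set.union_comm _ _).trans hcover) (hVm.trans (by rw [Set.union_comm]))
  refine ⟨fun v hv => ?_, h0, h1, Set.eq_empty_of_forall_notMem fun x hx => ?_⟩
  · subst hVm
    exact exists_edge_mem_compl_winRegionAll_union hW hE hcover hv
  · exact (Set.ext_iff.mp hVm x).mp x.2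
      (hx.imp (fun h => h0 ⟨x, h, rfl⟩) fun h => h1 ⟨x, h, rfl⟩)

/-- the restriction `G⁻` of `G` to `V⁻ = V \ (W₀ᵐ(G) ∪ W₁ᵐ(G))`
is a well-defined game, its memoryless winning regions are included in those of
`G`, and hence both are empty. -/
theorem stmt11 {V C : Type*} [Nonempty C]
    (V0 V1 : Set V) (E : Set (V × V)) (π : V → C) (W : Set (ℕ → C))
    (hdisj : Disjoint V0 V1) (hcover : V0 ∪ V1 = Set.univ)
    (hE : ∀ v : V, ∃ u, (v, u) ∈ E)
    (hW : PrefixIndependent W)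
    (Vm : Set V)
    (hVm : Vm = (WinRegionAll V0 E π W ∪ WinRegionAll V1 E π Wᶜ)ᶜ)
    (hne : Vm.Nonempty) :
    (∀ v ∈ Vm, ∃ u ∈ Vm, (v, u) ∈ E) ∧
    (Subtype.val '' WinRegionAll {x : ↥Vm | x.val ∈ V0}
        {p : ↥Vm × ↥Vm | (p.1.val, p.2.val) ∈ E} (fun x : ↥Vm => π x.val) W
      ⊆ WinRegionAll V0 E π W) ∧
    (Subtype.val '' WinRegionAll {x : ↥Vm | x.val ∈ V1}
        {p : ↥Vm × ↥Vm | (p.1.val, p.2.val) ∈ E} (fun x : ↥Vm => π x.val) Wᶜ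
      ⊆ WinRegionAll V1 E π Wᶜ) ∧
    (WinRegionAll {x : ↥Vm | x.val ∈ V0}
        {p : ↥Vm × ↥Vm | (p.1.val, p.2.val) ∈ E} (fun x : ↥Vm => π x.val) W ∪
     WinRegionAll {x : ↥Vm | x.val ∈ V1}
        {p : ↥Vm × ↥Vm | (p.1.val, p.2.val) ∈ E} (fun x : ↥Vm => π x.val) Wᶜ
      = ∅) :=
  stmt11_general V0 V1 E π W hcover hE hW Vm hVm
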